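/- Asymptotic formula: for x ≠ 0 and x ∉ {1, q, q², ...} (so y/x avoids poles), lim_{n→∞} p_n^{(α,β)}(x,y) / ((-x)^n q^{n(1-n)/2}) = (y/x;q)_∞ / (αq;q)_∞. -/

import Mathlib

open Finset

/-- q-shifted factorial (a;q)_n -/
noncomputable def qPoch (a q : ℝ) (n : ℕ) : ℝ := ∏ j ∈ Finset.range n, (1 - a * q ^ j)

/-- infinite q-shifted factorial (a;q)_∞ -/
noncomputable def qPochInf (a q : ℝ) : ℝ := ∏' j : ℕ, (1 - a * q ^ j)

/-- q-binomial coefficient [n choose k]_q -/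
noncomputable def qBinom (q : ℝ) (n k : ℕ) : ℝ :=
  qPoch q q n / (qPoch q q k * qPoch q q (n - k))

/-- q-derivative -/
noncomputable def Dq (q : ℝ) (f : ℝ → ℝ) (x : ℝ) : ℝ := (f x - f (q * x)) / x

/-- bivariate q-Laguerre polynomial L_n^{(α)}(x,y) -/
noncomputable def qLaguerre (q α : ℝ) (n : ℕ) (x y : ℝ) : ℝ :=
  ∑ k ∈ Finset.range (n + 1),
    (-1 : ℝ) ^ k * qBinom q n k * (q ^ ((k : ℝ) ^ 2 + (k : ℝ) * α)) /
      qPoch (q ^ (α + 1)) q k * x ^ k * y ^ (n - k)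

/-- bivariate little q-Jacobi polynomial p_n^{(α,β)}(x,y) -/
noncomputable def littleQJacobi (q a b : ℝ) (n : ℕ) (x y : ℝ) : ℝ :=
  ∑ k ∈ Finset.range (n + 1),
    (-1 : ℝ) ^ k * (q ^ (((k : ℝ) * ((k : ℝ) + 1 - 2 * (n : ℝ))) / 2)) * qBinom q n k *
      (qPoch (a * b * q ^ (n + 1)) q k / qPoch (a * q) q k) * x ^ k * y ^ (n - k)

/-!
Reversing the order of summation,
`p_n(x,y) / ((-x)^n q^{n(1-n)/2}) = ∑_{m ≤ n} (-1)^m q^{m(m-1)/2} [n,m]_q (y/x)^m R_n(n-m)` with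
`R_n(k) = (αβq^{n+1};q)_k / (αq;q)_k`. For fixed `m`, `R_n(n-m) → 1/(αq;q)_∞`, and with `R_n`
replaced by this limit the sum is `(y/x;q)_n / (αq;q)_∞` by the finite q-binomial theorem. The
error tends to `0` by dominated convergence (Tannery's theorem): the q-binomials and the `R_n(k)`
are uniformly bounded, and `∑ q^{m(m-1)/2} |y/x|^m` converges.
-/

open Filter Topology

lemma qPoch_zero (c q : ℝ) : qPoch c q 0 = 1 :=
  prod_range_zero _

lemma qPoch_succ (c q : ℝ) (n : ℕ) : qPoch c q (n + 1) = qPoch c q n * (1 - c * q ^ n) :=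
  prod_range_succ _ _

lemma qPoch_eq_prod_one_add (c q : ℝ) (n : ℕ) :
    qPoch c q n = ∏ j ∈ range n, (1 + -(c * q ^ j)) := by
  simp only [qPoch, sub_eq_add_neg]

section qPochhammer

variable {q : ℝ}

lemma summable_norm_neg_mul_pow (hq : |q| < 1) (c : ℝ) :
    Summable fun j : ℕ => ‖-(c * q ^ j)‖ := by
  simpa [abs_mul, abs_pow] using (summable_geometric_of_lt_one (abs_nonneg q) hq).mul_left |c|

lemma abs_qPoch_sub_one_le (hq : |q| < 1) {c r : ℝ} (hc : |c| ≤ r) (n : ℕ) :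
    |qPoch c q n - 1| ≤ Real.exp (r / (1 - |q|)) - 1 := by
  rw [qPoch_eq_prod_one_add]
  refine (Finset.norm_prod_one_add_sub_one_le (R := ℝ) _ _).trans
    (sub_le_sub_right (Real.exp_le_exp.2 ?_) 1)
  calc ∑ j ∈ range n, ‖-(c * q ^ j)‖ ≤ ∑' j, ‖-(c * q ^ j)‖ :=
        (summable_norm_neg_mul_pow hq c).sum_le_tsum _ fun j _ => norm_nonneg _
    _ = |c| / (1 - |q|) := by
        simp only [norm_neg, norm_mul, norm_pow, Real.norm_eq_abs]
        rw [tsum_mul_left, tsum_geometric_of_lt_one (abs_nonneg q) hq, div_eq_mul_inv]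
    _ ≤ r / (1 - |q|) := by gcongr

lemma abs_qPoch_le (hq : |q| < 1) {c r : ℝ} (hc : |c| ≤ r) (n : ℕ) :
    |qPoch c q n| ≤ Real.exp (r / (1 - |q|)) := by
  have := abs_qPoch_sub_one_le hq hc n
  have := abs_sub_abs_le_abs_sub (qPoch c q n) 1
  rw [abs_one] at this
  linarith

lemma tendsto_qPoch_one {ι : Type*} {l : Filter ι} {c : ι → ℝ} (hq : |q| < 1)
    (hc : Tendsto c l (𝓝 0)) (k : ι → ℕ) :
    Tendsto (fun i => qPoch (c i) q (k i)) l (𝓝 1) := by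
  have hdiv : Tendsto (fun i => |c i| / (1 - |q|)) l (𝓝 0) := by
    simpa using hc.abs.div_const (1 - |q|)
  have hexp : Tendsto (fun i => Real.exp (|c i| / (1 - |q|)) - 1) l (𝓝 0) := by
    simpa using ((Real.continuous_exp.tendsto 0).comp hdiv).sub_const 1
  exact tendsto_sub_nhds_zero_iff.1
    (squeeze_zero_norm (fun i => abs_qPoch_sub_one_le hq le_rfl (k i)) hexp)

lemma tendsto_qPoch (hq : |q| < 1) (c : ℝ) :
    Tendsto (qPoch c q) atTop (𝓝 (qPochInf c q)) := by
  rw [show qPoch c q = _ from funext (qPoch_eq_prod_one_add c q), qPochInf]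
  simpa only [sub_eq_add_neg] using
    (multipliable_one_add_of_summable (summable_norm_neg_mul_pow hq c)).tendsto_prod_tprod_nat

lemma qPochInf_ne_zero (hq : |q| < 1) {c : ℝ} (hc : ∀ j : ℕ, c * q ^ j ≠ 1) :
    qPochInf c q ≠ 0 := by
  simpa only [qPochInf, sub_eq_add_neg] using tprod_one_add_ne_zero_of_summable
    (fun j => by rw [← sub_eq_add_neg, sub_ne_zero]; exact (hc j).symm)
    (summable_norm_neg_mul_pow hq c)

lemma qPoch_eq_zero {c : ℝ} {j n : ℕ} (hj : c * q ^ j = 1) (hn : j < n) : qPoch c q n = 0 :=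
  prod_eq_zero (mem_range.2 hn) (by rw [hj, sub_self])

/-- With `0⁻¹ = 0`, this also covers the case where a factor `1 - c q ^ j` vanishes. -/
lemma tendsto_inv_qPoch (hq : |q| < 1) (c : ℝ) :
    Tendsto (fun n => (qPoch c q n)⁻¹) atTop (𝓝 (qPochInf c q)⁻¹) := by
  by_cases hc : ∃ j : ℕ, c * q ^ j = 1
  · obtain ⟨j, hj⟩ := hc
    have hzero : qPoch c q =ᶠ[atTop] fun _ => 0 :=
      eventually_atTop.2 ⟨j + 1, fun n hn => qPoch_eq_zero hj hn⟩
    have hinf : qPochInf c q = 0 :=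
      tendsto_nhds_unique (tendsto_qPoch hq c) (tendsto_const_nhds.congr' hzero.symm)
    rw [hinf, inv_zero]
    exact tendsto_const_nhds.congr' (hzero.mono fun n hn => by simp [hn])
  · push Not at hc
    exact (tendsto_qPoch hq c).inv₀ (qPochInf_ne_zero hq hc)

lemma exists_abs_inv_qPoch_le (hq : |q| < 1) (c : ℝ) :
    ∃ B, ∀ n, |(qPoch c q n)⁻¹| ≤ B := by
  obtain ⟨B, hB⟩ := (tendsto_inv_qPoch hq c).abs.bddAbove_range
  exact ⟨B, fun n => hB ⟨n, rfl⟩⟩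

lemma tendsto_qPoch_div_qPoch (hq : |q| < 1) {c : ℕ → ℝ} (hc : Tendsto c atTop (𝓝 0))
    (d : ℝ) (m : ℕ) :
    Tendsto (fun n => qPoch (c n) q (n - m) / qPoch d q (n - m)) atTop
      (𝓝 (qPochInf d q)⁻¹) := by
  simpa only [div_eq_mul_inv, one_mul, Function.comp_def] using
    (tendsto_qPoch_one hq hc (· - m)).mul ((tendsto_inv_qPoch hq d).comp (tendsto_sub_atTop_nat m))

lemma exists_abs_qPoch_div_qPoch_le (hq : |q| < 1) {c : ℕ → ℝ} {r : ℝ} (hc : ∀ n, |c n| ≤ r)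
    (d : ℝ) : ∃ B, ∀ n k, |qPoch (c n) q k / qPoch d q k| ≤ B := by
  obtain ⟨B, hB⟩ := exists_abs_inv_qPoch_le hq d
  refine ⟨Real.exp (r / (1 - |q|)) * B, fun n k => ?_⟩
  rw [div_eq_mul_inv, abs_mul]
  exact mul_le_mul (abs_qPoch_le hq (hc n) k) (hB k) (abs_nonneg _) (Real.exp_pos _).le

end qPochhammer

section qBinomial

variable {q : ℝ}

lemma one_sub_mul_pow_ne_zero (hq : |q| < 1) (j : ℕ) : 1 - q * q ^ j ≠ 0 := by
  rw [sub_ne_zero, ← pow_succ']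
  refine fun h => (pow_lt_one₀ (abs_nonneg q) hq j.succ_ne_zero).ne ?_
  rw [← abs_pow, ← h, abs_one]

lemma qPoch_self_ne_zero (hq : |q| < 1) (n : ℕ) : qPoch q q n ≠ 0 :=
  prod_ne_zero_iff.2 fun j _ => one_sub_mul_pow_ne_zero hq j

lemma qBinom_zero_right (hq : |q| < 1) (n : ℕ) : qBinom q n 0 = 1 := by
  rw [qBinom, qPoch_zero, one_mul, Nat.sub_zero, div_self (qPoch_self_ne_zero hq n)]

lemma qBinom_self (hq : |q| < 1) (n : ℕ) : qBinom q n n = 1 := by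
  rw [qBinom, Nat.sub_self, qPoch_zero, mul_one, div_self (qPoch_self_ne_zero hq n)]

lemma qBinom_symm {n m : ℕ} (hm : m ≤ n) : qBinom q n (n - m) = qBinom q n m := by
  rw [qBinom, qBinom, Nat.sub_sub_self hm, mul_comm]

lemma qBinom_succ_succ (hq : |q| < 1) {n j : ℕ} (hj : j < n) :
    qBinom q (n + 1) (j + 1) = qBinom q n (j + 1) + q ^ (n - j) * qBinom q n j := by
  obtain ⟨d, rfl⟩ : ∃ d, n = j + d + 1 := ⟨n - j - 1, by omega⟩
  rw [qBinom, qBinom, qBinom, show j + d + 1 + 1 - (j + 1) = d + 1 by omega,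
    show j + d + 1 - (j + 1) = d by omega, show j + d + 1 - j = d + 1 by omega,
    qPoch_succ q q (j + d + 1), qPoch_succ q q j, qPoch_succ q q d]
  have := qPoch_self_ne_zero hq j
  have := qPoch_self_ne_zero hq d
  have := one_sub_mul_pow_ne_zero hq j
  have := one_sub_mul_pow_ne_zero hq d
  field_simp
  ring

lemma exists_abs_qBinom_le (hq : |q| < 1) : ∃ C, ∀ n m, |qBinom q n m| ≤ C := by
  obtain ⟨B, hB⟩ := exists_abs_inv_qPoch_le hq q
  refine ⟨Real.exp (|q| / (1 - |q|)) * (B * B), fun n m => ?_⟩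
  rw [qBinom, div_eq_mul_inv, mul_inv, abs_mul, abs_mul]
  gcongr
  · exact abs_qPoch_le hq le_rfl n
  · exact (abs_nonneg _).trans (hB m)
  · exact hB m
  · exact hB (n - m)

lemma sum_qBinom_eq_qPoch (hq : |q| < 1) (z : ℝ) (n : ℕ) :
    ∑ m ∈ range (n + 1), (-1 : ℝ) ^ m * q ^ m.choose 2 * qBinom q n m * z ^ m =
      qPoch z q n := by
  induction n with
  | zero => simp [qBinom_zero_right hq, qPoch_zero]
  | succ n ih =>
    set T : ℕ → ℕ → ℝ := fun N m => (-1 : ℝ) ^ m * q ^ m.choose 2 * qBinom q N m * z ^ m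
      with hT
    have hT0 (N : ℕ) : T N 0 = 1 := by simp [hT, qBinom_zero_right hq]
    have hTtop : T (n + 1) (n + 1) = -(z * q ^ n) * T n n := by
      simp only [hT, qBinom_self hq, Nat.choose_succ_succ', Nat.choose_one_right]
      ring
    have hTsucc : ∀ j ∈ range n, T (n + 1) (j + 1) = T n (j + 1) - z * q ^ n * T n j := by
      intro j hj
      obtain ⟨p, rfl⟩ : ∃ p, n = j + p := ⟨n - j, by have := mem_range.1 hj; omega⟩
      simp only [hT, qBinom_succ_succ hq (mem_range.1 hj), Nat.choose_succ_succ',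
        Nat.choose_one_right, Nat.add_sub_cancel_left]
      ring
    calc ∑ m ∈ range (n + 1 + 1), T (n + 1) m
        = ∑ j ∈ range n, T (n + 1) (j + 1) + T (n + 1) (n + 1) + T (n + 1) 0 := by
          rw [sum_range_succ', sum_range_succ]
      _ = (∑ j ∈ range n, T n (j + 1) + T n 0)
            - z * q ^ n * (∑ j ∈ range n, T n j + T n n) := by
          rw [sum_congr rfl hTsucc, sum_sub_distrib, ← mul_sum, hTtop, hT0, hT0]
          ring
      _ = qPoch z q (n + 1) := by
          rw [← sum_range_succ', ← sum_range_succ, ih, qPoch_succ]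
          ring

end qBinomial

lemma summable_pow_choose_two_mul_pow {q : ℝ} (hq : |q| < 1) (r : ℝ) :
    Summable fun m : ℕ => q ^ m.choose 2 * r ^ m := by
  refine summable_of_ratio_norm_eventually_le (r := 1 / 2) (by norm_num) ?_
  have hsmall : Tendsto (fun m : ℕ => |q| ^ m * |r|) atTop (𝓝 0) := by
    simpa using (tendsto_pow_atTop_nhds_zero_of_lt_one (abs_nonneg q) hq).mul_const |r|
  filter_upwards [hsmall.eventually (eventually_le_nhds (by norm_num : (0 : ℝ) < 1 / 2))]
    with m hm
  have hratio :
      ‖q ^ (m + 1).choose 2 * r ^ (m + 1)‖ = |q| ^ m * |r| * ‖q ^ m.choose 2 * r ^ m‖ := by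
    simp only [Real.norm_eq_abs, abs_mul, abs_pow, Nat.choose_succ_succ', Nat.choose_one_right]
    ring
  rw [hratio]
  exact mul_le_mul_of_nonneg_right hm (norm_nonneg _)

lemma tendsto_sum_range_of_dominated {E : Type*} [NormedAddCommGroup E] [CompleteSpace E]
    {f : ℕ → ℕ → E} {g : ℕ → E} {b : ℕ → ℝ} (hb : Summable b)
    (hfb : ∀ n m, m ≤ n → ‖f n m‖ ≤ b m) (hfg : ∀ m, Tendsto (f · m) atTop (𝓝 (g m))) :
    Tendsto (fun n => ∑ m ∈ range (n + 1), f n m) atTop (𝓝 (∑' m, g m)) := by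
  have hsum (n : ℕ) : ∑ m ∈ range (n + 1), f n m = ∑' m, if m ≤ n then f n m else 0 := by
    rw [tsum_eq_sum (s := range (n + 1)) fun m hm => if_neg (by simp at hm; omega)]
    exact sum_congr rfl fun m hm => (if_pos (by simp at hm; omega)).symm
  simp only [hsum]
  refine tendsto_tsum_of_dominated_convergence hb (fun m => (hfg m).congr' ?_)
    (Eventually.of_forall fun n m => ?_)
  · filter_upwards [eventually_ge_atTop m] with n hn using (if_pos hn).symm
  · split_ifs with h
    · exact hfb n m h
    · simpa using (norm_nonneg _).trans (hfb m m le_rfl)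

lemma tendsto_sum_range_mul_sub_of_bounded {F R : ℕ → ℕ → ℝ} {b : ℕ → ℝ} {B L : ℝ}
    (hb : Summable b) (hF : ∀ n m, |F n m| ≤ b m) (hR : ∀ n m, |R n m| ≤ B)
    (hRL : ∀ m, Tendsto (R · m) atTop (𝓝 L)) :
    Tendsto (fun n => ∑ m ∈ range (n + 1), F n m * (R n m - L)) atTop (𝓝 0) := by
  have hle (n m : ℕ) : ‖F n m * (R n m - L)‖ ≤ b m * |R n m - L| := by
    rw [Real.norm_eq_abs, abs_mul]
    exact mul_le_mul_of_nonneg_right (hF n m) (abs_nonneg _)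
  simpa using tendsto_sum_range_of_dominated (g := 0) (hb.mul_right (B + |L|))
    (fun n m _ => (hle n m).trans (mul_le_mul_of_nonneg_left
      ((abs_sub _ _).trans (add_le_add (hR n m) le_rfl)) ((abs_nonneg _).trans (hF n m))))
    fun m => squeeze_zero_norm (hle · m) (by
      simpa using (((hRL m).sub_const L).abs).const_mul (b m))

lemma rpow_reflected_exponent {q : ℝ} (hq : 0 < q) {m n : ℕ} (hm : m ≤ n) :
    q ^ ((((n - m : ℕ) : ℝ) * (((n - m : ℕ) : ℝ) + 1 - 2 * (n : ℝ))) / 2)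
      = q ^ ((n : ℝ) * (1 - (n : ℝ)) / 2) * q ^ m.choose 2 := by
  rw [← Real.rpow_natCast q (m.choose 2), ← Real.rpow_add hq, Nat.cast_choose_two,
    Nat.cast_sub hm]
  ring_nf

lemma littleQJacobi_div_eq_sum {q a b x y : ℝ} (hq : 0 < q) (hx : x ≠ 0) (n : ℕ) :
    littleQJacobi q a b n x y / ((-x) ^ n * q ^ ((n : ℝ) * (1 - (n : ℝ)) / 2)) =
      ∑ m ∈ range (n + 1), (-1 : ℝ) ^ m * q ^ m.choose 2 * qBinom q n m * (y / x) ^ m *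
        (qPoch (a * b * q ^ (n + 1)) q (n - m) / qPoch (a * q) q (n - m)) := by
  rw [littleQJacobi, sum_div, ← sum_range_reflect]
  refine sum_congr rfl fun m hm => ?_
  have hmn : m ≤ n := Nat.lt_succ_iff.1 (mem_range.1 hm)
  rw [Nat.add_sub_cancel, Nat.sub_sub_self hmn, qBinom_symm hmn,
    rpow_reflected_exponent hq hmn]
  have hW := (Real.rpow_pos_of_pos hq ((n : ℝ) * (1 - (n : ℝ)) / 2)).ne'
  obtain ⟨k, rfl⟩ : ∃ k, n = m + k := ⟨n - m, by omega⟩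
  rw [Nat.add_sub_cancel_left, div_eq_iff (mul_ne_zero (pow_ne_zero _ (neg_ne_zero.2 hx)) hW),
    div_pow, neg_pow x, pow_add (-1 : ℝ), pow_add x]
  field_simp
  rcases neg_one_pow_eq_or ℝ m with h | h <;> rw [h] <;> ring

theorem littleQJacobi_asymptotic_general (q a b x y : ℝ) (hq : 0 < q) (hq1 : q < 1)
    (hx : x ≠ 0) :
    Filter.Tendsto
      (fun n : ℕ =>
        littleQJacobi q a b n x y / ((-x) ^ n * q ^ ((n : ℝ) * (1 - (n : ℝ)) / 2)))
      Filter.atTop (nhds (qPochInf (y / x) q / qPochInf (a * q) q)) := by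
  have hq' : |q| < 1 := abs_lt.2 ⟨by linarith, hq1⟩
  set z := y / x
  set L := (qPochInf (a * q) q)⁻¹
  set c : ℕ → ℝ := fun n => a * b * q ^ (n + 1)
  have hc : Tendsto c atTop (𝓝 0) := by
    simpa [c] using ((tendsto_pow_atTop_nhds_zero_of_lt_one hq.le hq1).comp
      (tendsto_add_atTop_nat 1)).const_mul (a * b)
  have hcr (n : ℕ) : |c n| ≤ |a * b| := by
    rw [abs_mul _ (q ^ _), abs_pow, abs_of_pos hq]
    exact mul_le_of_le_one_right (abs_nonneg _) (pow_le_one₀ hq.le hq1.le)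
  obtain ⟨C, hC⟩ := exists_abs_qBinom_le hq'
  obtain ⟨B, hB⟩ := exists_abs_qPoch_div_qPoch_le hq' hcr (a * q)
  have hF (n m : ℕ) : |(-1 : ℝ) ^ m * q ^ m.choose 2 * qBinom q n m * z ^ m| ≤
      C * (q ^ m.choose 2 * |z| ^ m) := by
    simp only [abs_mul, abs_pow, abs_neg, abs_one, one_pow, one_mul, abs_of_pos hq]
    have := mul_le_mul_of_nonneg_left (hC n m) (by positivity : 0 ≤ q ^ m.choose 2 * |z| ^ m)
    linarith
  have hremainder := tendsto_sum_range_mul_sub_of_bounded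
    ((summable_pow_choose_two_mul_pow hq' |z|).mul_left C) hF (fun n m => hB n (n - m))
    (tendsto_qPoch_div_qPoch hq' hc (a * q))
  have hlim := ((tendsto_qPoch hq' z).mul_const L).add hremainder
  rw [add_zero, ← div_eq_mul_inv] at hlim
  refine hlim.congr fun n => ?_
  rw [littleQJacobi_div_eq_sum hq hx, ← sum_qBinom_eq_qPoch hq', sum_mul, ← sum_add_distrib]
  exact sum_congr rfl fun m _ => by ring

theorem littleQJacobi_asymptotic (q a b x y : ℝ) (hq : 0 < q) (hq1 : q < 1)
    (hx : x ≠ 0) (hx' : ∀ k : ℕ, x ≠ q ^ k) :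
    Filter.Tendsto
      (fun n : ℕ =>
        littleQJacobi q a b n x y / ((-x) ^ n * q ^ ((n : ℝ) * (1 - (n : ℝ)) / 2)))
      Filter.atTop (nhds (qPochInf (y / x) q / qPochInf (a * q) q)) :=
  littleQJacobi_asymptotic_general q a b x y hq hq1 hx
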